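/- arXiv:1007.0301 — 2 statements merged into one kernel-verified Lean document; each statement's English description precedes it below -/
import Mathlib

section
/- Let G be a finite group acting on a Noetherian commutative ring R. If R is a finitely generated algebra over a Noetherian ring A and the action is A-linear, then the invariant ring R^G is a finitely generated A-algebra. -/
/-- The subalgebra of invariants of a multiplicative semiring action commuting
with the algebra structure. -/
def fixedSubalgebra (A R G : Type*) [CommRing A] [CommRing R] [Algebra A R]
    [Monoid G] [MulSemiringAction G R] [SMulCommClass G A R] : Subalgebra A R where
  carrier := MulAction.fixedPoints G R
  add_mem' := fun {a b} ha hb g => by rw [smul_add, ha g, hb g]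
  mul_mem' := fun {a b} ha hb g => by rw [smul_mul', ha g, hb g]
  algebraMap_mem' := fun a g => by
    rw [Algebra.algebraMap_eq_smul_one, smul_comm, smul_one]

theorem fixedSubalgebra_isIntegral
    (A R G : Type*) [CommRing A] [CommRing R]
    [Algebra A R] [Group G] [Finite G] [MulSemiringAction G R] [SMulCommClass G A R] :
    Algebra.IsIntegral (fixedSubalgebra A R G) R := by
  cases nonempty_fintype G
  constructor
  intro x
  have hcoeff : (↑(prodXSubSMul G R x).coeffs : Set R) ⊆ (fixedSubalgebra A R G).toSubring := by
    intro c hc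
    simp only [Polynomial.coeffs, Finset.coe_image, Set.mem_image] at hc
    obtain ⟨n, -, rfl⟩ := hc
    exact fun g => prodXSubSMul.coeff G R x g n
  refine ⟨(prodXSubSMul G R x).toSubring (fixedSubalgebra A R G).toSubring hcoeff, ?_, ?_⟩
  · rw [Polynomial.monic_toSubring]
    exact prodXSubSMul.monic G R x
  · have : Polynomial.eval₂ (Subring.subtype (fixedSubalgebra A R G).toSubring) x
        ((prodXSubSMul G R x).toSubring _ hcoeff) = 0 := by
      rw [Polynomial.eval₂_eq_eval_map, Polynomial.map_toSubring]
      exact prodXSubSMul.eval G R x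
    exact this

/-- Noether's finiteness theorem: if a finite group `G` acts `A`-linearly on a Noetherian
commutative ring `R` which is a finitely generated algebra over a Noetherian ring `A`,
then the invariant ring `R^G` is a finitely generated `A`-algebra. -/
theorem noether_finiteness
    (A R G : Type*) [CommRing A] [IsNoetherianRing A] [CommRing R] [IsNoetherianRing R]
    [Algebra A R] [Algebra.FiniteType A R]
    [Group G] [Finite G] [MulSemiringAction G R] [SMulCommClass G A R] :
    Algebra.FiniteType A (fixedSubalgebra A R G) := by
  set B := fixedSubalgebra A R G
  have hInt : Algebra.IsIntegral B R := fixedSubalgebra_isIntegral A R G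
  have hFT : Algebra.FiniteType B R :=
    Algebra.FiniteType.of_restrictScalars_finiteType A B R
  have hFin : Module.Finite B R := Algebra.IsIntegral.finite
  refine ⟨?_⟩
  exact fg_of_fg_of_fg A B R Algebra.FiniteType.out hFin.fg_top (Subtype.val_injective : Function.Injective (algebraMap B R))
end

section
/- If R is a Noetherian ring and a finite group G acts on R, then R is a finitely generated module over R^G provided R is a finitely generated algebra over a Noetherian subring of R^G. -/
/-- The subring of invariants of a multiplicative semiring action. -/
def fixedSubring (G R : Type*) [Monoid G] [CommRing R] [MulSemiringAction G R] :
    Subring R where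
  carrier := MulAction.fixedPoints G R
  zero_mem' := fun g => smul_zero g
  one_mem' := fun g => smul_one g
  add_mem' := fun {a b} ha hb g => by rw [smul_add, ha g, hb g]
  mul_mem' := fun {a b} ha hb g => by rw [smul_mul', ha g, hb g]
  neg_mem' := fun {a} ha g => by rw [smul_neg, ha g]

theorem isIntegral_fixedSubring
    (G R : Type*) [Group G] [Finite G] [CommRing R] [MulSemiringAction G R] :
    Algebra.IsIntegral (fixedSubring G R) R := by
  cases nonempty_fintype G
  constructor
  intro x
  refine ⟨(prodXSubSMul G R x).toSubring (fixedSubring G R)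
    (fun c hc => ?_), ?_, ?_⟩
  · obtain ⟨n, -, hn⟩ := Polynomial.mem_coeffs_iff.1 hc
    exact fun g => hn.symm ▸ prodXSubSMul.coeff G R x g n
  · exact (Polynomial.monic_toSubring _ _ _).2 (prodXSubSMul.monic G R x)
  · have h := prodXSubSMul.eval G R x
    rw [Polynomial.eval₂_eq_eval_map,
      show (algebraMap (fixedSubring G R) R) = (fixedSubring G R).subtype from rfl]
    refine (congrArg (Polynomial.eval x) ?_).trans h
    exact Polynomial.map_toSubring (prodXSubSMul G R x) (fixedSubring G R) _

/-- If a finite group `G` acts on a Noetherian commutative ring `R` which is a finitely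
generated algebra over a Noetherian subring `A` of `R^G`, then `R` is a finitely generated
module over the invariant subring `R^G`. -/
theorem finite_module_over_invariants
    (G R : Type*) [Group G] [Finite G] [CommRing R] [IsNoetherianRing R]
    [MulSemiringAction G R]
    (A : Subring R) (hA : A ≤ fixedSubring G R) [IsNoetherianRing A]
    (hft : Algebra.FiniteType A R) :
    Module.Finite (fixedSubring G R) R := by
  have : Algebra.IsIntegral (fixedSubring G R) R := isIntegral_fixedSubring G R
  letI : Algebra A (fixedSubring G R) := (Subring.inclusion hA).toAlgebra
  haveI : IsScalarTower A (fixedSubring G R) R :=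
    IsScalarTower.of_algebraMap_eq fun a => rfl
  haveI : Algebra.FiniteType (fixedSubring G R) R :=
    Algebra.FiniteType.of_restrictScalars_finiteType A (fixedSubring G R) R
  exact Algebra.IsIntegral.finite
end
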